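/- arXiv:1901.09522 — 2 statements merged into one kernel-verified Lean document; each statement's English description precedes it below -/
import Mathlib

section
/- Let X be a real normed space and J : X → ℝ a locally Lipschitz function. Then the relaxed monotonicity condition ⟨ξ−η, u−v⟩ ≥ −m‖u−v‖² for all u,v ∈ X, ξ ∈ ∂J(u), η ∈ ∂J(v) (where ∂J is the Clarke subdifferential and m ≥ 0) holds if and only if J⁰(u; v−u) + J⁰(v; u−v) ≤ m‖u−v‖² for all u,v ∈ X, where J⁰ denotes the Clarke generalized directional derivative. -/
/-- The Clarke generalized directional derivative
`J⁰(u;v) = limsup_{w→u, λ→0⁺} (J(w+λv)−J(w))/λ`. -/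
noncomputable def clarkeDeriv {X : Type*} [NormedAddCommGroup X] [NormedSpace ℝ X]
    (J : X → ℝ) (u v : X) : ℝ :=
  Filter.limsup (fun p : X × ℝ => (J (p.1 + p.2 • v) - J p.1) / p.2)
    ((nhds u) ×ˢ (nhdsWithin (0 : ℝ) (Set.Ioi 0)))

/-- The Clarke subdifferential `∂J(u) = {ξ ∈ X* : ⟨ξ,v⟩ ≤ J⁰(u;v) for all v}`. -/
def clarkeSubdiff {X : Type*} [NormedAddCommGroup X] [NormedSpace ℝ X]
    (J : X → ℝ) (u : X) : Set (X →L[ℝ] ℝ) :=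
  {ξ | ∀ v : X, ξ v ≤ clarkeDeriv J u v}

/-
The Clarke derivative `J⁰(u; ·)` of a locally Lipschitz function is positively homogeneous,
subadditive and bounded by `K‖·‖`, so by Hahn–Banach every value `J⁰(u; w)` is attained as `ξ w`
by some continuous linear `ξ ≤ J⁰(u; ·)`, i.e. by some `ξ ∈ ∂J(u)`. Hence
`J⁰(u; w) = max {ξ w | ξ ∈ ∂J(u)}`, and since `(ξ - η)(u - v) = -(ξ (v - u) + η (u - v))`, the
monotonicity condition over all pairs of subgradients is the same as the bound on
`J⁰(u; v - u) + J⁰(v; u - v)`.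
-/

open Filter Set Topology

section Sublinear

variable {X : Type*} [NormedAddCommGroup X] [NormedSpace ℝ X]

theorem exists_continuousLinearMap_le_apply_eq_of_sublinear {N : X → ℝ} {K : ℝ}
    (N_hom : ∀ c : ℝ, 0 < c → ∀ x, N (c • x) = c * N x) (N_add : ∀ x y, N (x + y) ≤ N x + N y)
    (N_le : ∀ x, N x ≤ K * ‖x‖) (w : X) :
    ∃ ξ : X →L[ℝ] ℝ, (∀ x, ξ x ≤ N x) ∧ ξ w = N w := by
  have N_zero : N 0 = 0 := by
    have h := N_hom 2 two_pos 0
    rw [smul_zero] at h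
    linarith
  let f := LinearPMap.mkSpanSingleton' (σ := RingHom.id ℝ) w (N w) fun c hc => by
    rcases smul_eq_zero.1 hc with rfl | rfl
    · exact zero_smul ℝ _
    · rw [N_zero, smul_zero]
  have f_le : ∀ x : f.domain, f x ≤ N x := by
    rintro ⟨_, hx⟩
    obtain ⟨c, rfl⟩ := Submodule.mem_span_singleton.1 hx
    rw [LinearPMap.mkSpanSingleton'_apply, RingHom.id_apply, smul_eq_mul]
    rcases lt_trichotomy c 0 with hc | rfl | hc
    · have h := N_hom (-c) (neg_pos.2 hc) (-w)
      have h0 := N_add w (-w)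
      rw [neg_smul_neg] at h
      rw [add_neg_cancel, N_zero] at h0
      show c * N w ≤ N (c • w)
      rw [h]
      nlinarith
    · simp [N_zero]
    · rw [N_hom c hc w]
  obtain ⟨g, hgf, hgN⟩ := exists_extension_of_le_sublinear f N N_hom N_add f_le
  have g_bound : ∀ x, ‖g x‖ ≤ K * ‖x‖ := fun x => by
    rw [Real.norm_eq_abs, abs_le]
    have h := (hgN (-x)).trans (N_le (-x))
    rw [map_neg, norm_neg] at h
    exact ⟨by linarith, (hgN x).trans (N_le x)⟩
  refine ⟨g.mkContinuous K g_bound, hgN, ?_⟩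
  rw [LinearMap.mkContinuous_apply, hgf ⟨w, Submodule.mem_span_singleton_self w⟩]
  exact LinearPMap.mkSpanSingleton'_apply_self _ _ _ _

end Sublinear

section ClarkeFilter

variable {X : Type*} [TopologicalSpace X]

def clarkeFilter (u : X) : Filter (X × ℝ) := 𝓝 u ×ˢ 𝓝[>] 0

instance (u : X) : (clarkeFilter u).NeBot := by
  unfold clarkeFilter; infer_instance

theorem eventually_pos_clarkeFilter (u : X) : ∀ᶠ p in clarkeFilter u, 0 < p.2 :=
  tendsto_snd.eventually self_mem_nhdsWithin

theorem tendsto_snd_clarkeFilter (u : X) : Tendsto Prod.snd (clarkeFilter u) (𝓝 0) :=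
  tendsto_snd.mono_right nhdsWithin_le_nhds

theorem tendsto_rescale_clarkeFilter (u : X) {t : ℝ} (ht : 0 < t) :
    Tendsto (fun p : X × ℝ => (p.1, t * p.2)) (clarkeFilter u) (clarkeFilter u) := by
  refine tendsto_fst.prodMk (tendsto_nhdsWithin_iff.2 ⟨?_, ?_⟩)
  · have h := (tendsto_snd_clarkeFilter u).const_mul t
    rwa [mul_zero] at h
  · filter_upwards [eventually_pos_clarkeFilter u] with p hp using mul_pos ht hp

end ClarkeFilter

section ClarkeDeriv

variable {X : Type*} [NormedAddCommGroup X] [NormedSpace ℝ X]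

noncomputable def clarkeQuotient (J : X → ℝ) (v : X) (p : X × ℝ) : ℝ :=
  (J (p.1 + p.2 • v) - J p.1) / p.2

theorem clarkeDeriv_eq_limsup (J : X → ℝ) (u v : X) :
    clarkeDeriv J u v = limsup (clarkeQuotient J v) (clarkeFilter u) := rfl

theorem tendsto_add_smul_clarkeFilter (u a : X) :
    Tendsto (fun p : X × ℝ => p.1 + p.2 • a) (clarkeFilter u) (𝓝 u) := by
  have h := (tendsto_fst (f := 𝓝 u)).add ((tendsto_snd_clarkeFilter u).smul_const a)
  rwa [zero_smul, add_zero] at h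

theorem tendsto_translate_clarkeFilter (u a : X) :
    Tendsto (fun p : X × ℝ => (p.1 + p.2 • a, p.2)) (clarkeFilter u) (clarkeFilter u) :=
  (tendsto_add_smul_clarkeFilter u a).prodMk tendsto_snd

theorem clarkeQuotient_add (J : X → ℝ) (a b : X) (p : X × ℝ) :
    clarkeQuotient J (a + b) p = clarkeQuotient J a p + clarkeQuotient J b (p.1 + p.2 • a, p.2) := by
  simp only [clarkeQuotient, smul_add, ← add_assoc]
  rw [← add_div, sub_add_sub_cancel']

theorem clarkeQuotient_smul (J : X → ℝ) (x : X) {t : ℝ} (ht : 0 < t) (p : X × ℝ) :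
    clarkeQuotient J (t • x) p = t * clarkeQuotient J x (p.1, t * p.2) := by
  rcases eq_or_ne p.2 0 with h | h
  · simp [clarkeQuotient, h]
  · simp only [clarkeQuotient, smul_smul, mul_comm p.2 t]
    field_simp

namespace LocallyLipschitz

variable {J : X → ℝ}

theorem exists_eventually_abs_clarkeQuotient_le (hJ : LocallyLipschitz J) (u : X) :
    ∃ K : ℝ, ∀ x, ∀ᶠ p in clarkeFilter u, |clarkeQuotient J x p| ≤ K * ‖x‖ := by
  obtain ⟨K, t, ht, hK⟩ := hJ u
  refine ⟨K, fun x => ?_⟩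
  filter_upwards [tendsto_fst.eventually ht, (tendsto_add_smul_clarkeFilter u x).eventually ht,
    eventually_pos_clarkeFilter u] with p hp hpx hp_pos
  have hdist := hK.dist_le_mul _ hpx _ hp
  rw [dist_eq_norm, dist_eq_norm, add_sub_cancel_left, norm_smul, Real.norm_of_nonneg hp_pos.le,
    Real.norm_eq_abs] at hdist
  rw [clarkeQuotient, abs_div, abs_of_pos hp_pos, div_le_iff₀ hp_pos]
  linarith

variable (hJ : LocallyLipschitz J)
include hJ

theorem clarkeDeriv_le_of_eventually_le {u x : X} {c : ℝ}
    (h : ∀ᶠ p in clarkeFilter u, clarkeQuotient J x p ≤ c) : clarkeDeriv J u x ≤ c := by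
  obtain ⟨K, hK⟩ := hJ.exists_eventually_abs_clarkeQuotient_le u
  rw [clarkeDeriv_eq_limsup]
  exact limsup_le_of_le (isCoboundedUnder_le_of_eventually_le _
    ((hK x).mono fun p hp => (abs_le.1 hp).1)) h

theorem eventually_clarkeQuotient_lt {u x : X} {c : ℝ} (h : clarkeDeriv J u x < c) :
    ∀ᶠ p in clarkeFilter u, clarkeQuotient J x p < c := by
  obtain ⟨K, hK⟩ := hJ.exists_eventually_abs_clarkeQuotient_le u
  rw [clarkeDeriv_eq_limsup] at h
  exact eventually_lt_of_limsup_lt h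
    ⟨K * ‖x‖, eventually_map.2 <| (hK x).mono fun p hp => (abs_le.1 hp).2⟩

theorem exists_clarkeDeriv_le_mul_norm (u : X) : ∃ K : ℝ, ∀ x, clarkeDeriv J u x ≤ K * ‖x‖ := by
  obtain ⟨K, hK⟩ := hJ.exists_eventually_abs_clarkeQuotient_le u
  exact ⟨K, fun x => hJ.clarkeDeriv_le_of_eventually_le ((hK x).mono fun p hp => (abs_le.1 hp).2)⟩

theorem clarkeDeriv_add_le (u a b : X) :
    clarkeDeriv J u (a + b) ≤ clarkeDeriv J u a + clarkeDeriv J u b := by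
  refine le_of_forall_pos_le_add fun ε hε => hJ.clarkeDeriv_le_of_eventually_le ?_
  filter_upwards [hJ.eventually_clarkeQuotient_lt (x := a) (lt_add_of_pos_right _ (half_pos hε)),
    (tendsto_translate_clarkeFilter u a).eventually
      (hJ.eventually_clarkeQuotient_lt (x := b) (lt_add_of_pos_right _ (half_pos hε)))]
    with p ha hb
  rw [clarkeQuotient_add]
  linarith

theorem clarkeDeriv_smul_le (u x : X) {t : ℝ} (ht : 0 < t) :
    clarkeDeriv J u (t • x) ≤ t * clarkeDeriv J u x := by
  refine le_of_forall_pos_le_add fun ε hε => hJ.clarkeDeriv_le_of_eventually_le ?_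
  filter_upwards [(tendsto_rescale_clarkeFilter u ht).eventually
    (hJ.eventually_clarkeQuotient_lt (lt_add_of_pos_right _ (div_pos hε ht)))] with p hp
  rw [clarkeQuotient_smul J x ht]
  calc t * clarkeQuotient J x (p.1, t * p.2) ≤ t * (clarkeDeriv J u x + ε / t) :=
        mul_le_mul_of_nonneg_left hp.le ht.le
    _ = t * clarkeDeriv J u x + ε := by field_simp

theorem clarkeDeriv_smul (u x : X) {t : ℝ} (ht : 0 < t) :
    clarkeDeriv J u (t • x) = t * clarkeDeriv J u x := by
  refine le_antisymm (hJ.clarkeDeriv_smul_le u x ht) ?_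
  have h := hJ.clarkeDeriv_smul_le u (t • x) (inv_pos.2 ht)
  rw [inv_smul_smul₀ ht.ne'] at h
  calc t * clarkeDeriv J u x ≤ t * (t⁻¹ * clarkeDeriv J u (t • x)) :=
        mul_le_mul_of_nonneg_left h ht.le
    _ = clarkeDeriv J u (t • x) := by field_simp

theorem exists_mem_clarkeSubdiff_apply_eq (u w : X) :
    ∃ ξ ∈ clarkeSubdiff J u, ξ w = clarkeDeriv J u w := by
  obtain ⟨K, hK⟩ := hJ.exists_clarkeDeriv_le_mul_norm u
  exact exists_continuousLinearMap_le_apply_eq_of_sublinear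
    (fun c hc x => hJ.clarkeDeriv_smul u x hc) (hJ.clarkeDeriv_add_le u) hK w

end LocallyLipschitz

end ClarkeDeriv

theorem relaxed_monotonicity_iff_general {X : Type*} [NormedAddCommGroup X] [NormedSpace ℝ X]
    (J : X → ℝ) (hJ : LocallyLipschitz J) (m : ℝ) :
    (∀ u v : X, ∀ ξ ∈ clarkeSubdiff J u, ∀ η ∈ clarkeSubdiff J v,
        -(m * ‖u - v‖ ^ 2) ≤ (ξ - η) (u - v)) ↔
    (∀ u v : X, clarkeDeriv J u (v - u) + clarkeDeriv J v (u - v) ≤ m * ‖u - v‖ ^ 2) := by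
  have pairing (u v : X) (ξ η : X →L[ℝ] ℝ) : (ξ - η) (u - v) = -(ξ (v - u) + η (u - v)) := by
    rw [sub_apply, ← neg_sub v u, map_neg]
    ring
  constructor
  · intro h u v
    obtain ⟨ξ, hξ, hξ_eq⟩ := hJ.exists_mem_clarkeSubdiff_apply_eq u (v - u)
    obtain ⟨η, hη, hη_eq⟩ := hJ.exists_mem_clarkeSubdiff_apply_eq v (u - v)
    have := h u v ξ hξ η hη
    rw [pairing, hξ_eq, hη_eq] at this
    linarith
  · intro h u v ξ hξ η hη
    rw [pairing]
    linarith [hξ (v - u), hη (u - v), h u v]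

/-- For a locally Lipschitz `J`, the relaxed monotonicity condition
`⟨ξ−η, u−v⟩ ≥ −m‖u−v‖²` for all Clarke subgradients holds iff
`J⁰(u; v−u) + J⁰(v; u−v) ≤ m‖u−v‖²` for all `u, v`. -/
theorem relaxed_monotonicity_iff {X : Type*} [NormedAddCommGroup X] [NormedSpace ℝ X]
    (J : X → ℝ) (hJ : LocallyLipschitz J) (m : ℝ) (hm : 0 ≤ m) :
    (∀ u v : X, ∀ ξ ∈ clarkeSubdiff J u, ∀ η ∈ clarkeSubdiff J v,
        -(m * ‖u - v‖ ^ 2) ≤ (ξ - η) (u - v)) ↔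
    (∀ u v : X, clarkeDeriv J u (v - u) + clarkeDeriv J v (u - v) ≤ m * ‖u - v‖ ^ 2) :=
  relaxed_monotonicity_iff_general J hJ m
end

section
/- Let V be a Hilbert space with norm ‖·‖, and let A, B ∈ L(V,V*) with ⟨Av,v⟩ ≥ m_A‖v‖², ⟨Bv,v⟩ ≥ m_B‖v‖². Let M : V → X be a bounded linear map into a Banach space X, and let F : V → 2^{V*} satisfy ⟨ξ₁ − ξ₂, v₁ − v₂⟩ ≥ −m_J‖Mv₁ − Mv₂‖²_X for ξ_i ∈ F(v_i). Fix τ > 0 and a bounded linear operator K : V → V* with ‖K‖ ≤ c_E c_q τ. If m_B > m_J‖M‖² and τ < (m_B − m_J‖M‖²)/(c_E c_q), then the operator L(v) = Av + τBv + τKv + τM*F(Mv) is strictly monotone in the sense that any two solutions ū, ũ of L(v) ∋ g (for fixed g ∈ V*) coincide: (m_A + τ(m_B − m_J‖M‖² − τ c_E c_q))‖ū − ũ‖² ≤ 0 implies ū = ũ. -/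
/-!
Subtracting the two inclusions and testing with `w = ū - ũ` gives
`A w w + τ B w w + τ K w w + τ (ξ₁ - ξ₂) w = 0`. Coercivity of `A` and `B`, the bound on `K` and
the relaxed monotonicity of `F` bound the left side below by
`(m_A + τ (m_B - m_J ‖M‖² - c_E c_q τ)) ‖w‖²`, whose coefficient is positive by the smallness
condition on `τ`; hence `w = 0`.
-/

section

variable {V X : Type*} [SeminormedAddCommGroup V] [NormedSpace ℝ V]
  [SeminormedAddCommGroup X] [NormedSpace ℝ X]

lemma apply_sub_self_eq_zero_of_eq (A B K : V →L[ℝ] V →L[ℝ] ℝ) (τ : ℝ) {u u' : V}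
    {ξ ξ' : V →L[ℝ] ℝ}
    (h : A u + τ • B u + τ • K u + τ • ξ = A u' + τ • B u' + τ • K u' + τ • ξ') :
    A (u - u') (u - u') + τ * B (u - u') (u - u') + τ * K (u - u') (u - u')
      + τ * (ξ - ξ') (u - u') = 0 := by
  have h_tested := congrArg (fun f : V →L[ℝ] ℝ => f (u - u')) h
  simp only [map_sub, add_apply, sub_apply, smul_apply, smul_eq_mul] at h_tested ⊢
  linarith

lemma neg_mul_norm_sq_le_apply_self {K : V →L[ℝ] V →L[ℝ] ℝ} {C : ℝ}
    (hK : ∀ v, ‖K v‖ ≤ C * ‖v‖) (v : V) : -(C * ‖v‖ ^ 2) ≤ K v v := by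
  have h_abs : |K v v| ≤ C * ‖v‖ ^ 2 :=
    calc |K v v| = ‖K v v‖ := (Real.norm_eq_abs _).symm
      _ ≤ ‖K v‖ * ‖v‖ := (K v).le_opNorm v
      _ ≤ C * ‖v‖ * ‖v‖ := mul_le_mul_of_nonneg_right (hK v) (norm_nonneg v)
      _ = C * ‖v‖ ^ 2 := by ring
  exact neg_le_of_abs_le h_abs

lemma neg_mul_opNorm_sq_le_of_relaxed_monotone {M : V →L[ℝ] X} {m : ℝ} (hm : 0 ≤ m)
    {ξ₁ ξ₂ : V →L[ℝ] ℝ} {v₁ v₂ : V}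
    (h : -(m * ‖M v₁ - M v₂‖ ^ 2) ≤ (ξ₁ - ξ₂) (v₁ - v₂)) :
    -(m * ‖M‖ ^ 2 * ‖v₁ - v₂‖ ^ 2) ≤ (ξ₁ - ξ₂) (v₁ - v₂) := by
  have hM : ‖M v₁ - M v₂‖ ^ 2 ≤ ‖M‖ ^ 2 * ‖v₁ - v₂‖ ^ 2 := by
    rw [← map_sub, ← mul_pow]
    exact pow_le_pow_left₀ (norm_nonneg _) (M.le_opNorm _) 2
  linarith [mul_le_mul_of_nonneg_left hM hm]

end

theorem rothe_discrete_uniqueness_general {V X : Type*} [NormedAddCommGroup V]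
    [InnerProductSpace ℝ V] [NormedAddCommGroup X] [NormedSpace ℝ X]
    (A B K : V →L[ℝ] V →L[ℝ] ℝ) (M : V →L[ℝ] X)
    (F : V → Set (V →L[ℝ] ℝ))
    (m_A m_B m_J c_E c_q τ : ℝ)
    (hmA : 0 < m_A) (hmJ : 0 ≤ m_J)
    (hcE : 0 < c_E) (hcq : 0 < c_q) (hτpos : 0 < τ)
    (hAcoer : ∀ v : V, m_A * ‖v‖ ^ 2 ≤ A v v)
    (hBcoer : ∀ v : V, m_B * ‖v‖ ^ 2 ≤ B v v)
    (hK : ∀ v : V, ‖K v‖ ≤ c_E * c_q * τ * ‖v‖)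
    (hF : ∀ v₁ v₂ : V, ∀ ξ₁ ∈ F v₁, ∀ ξ₂ ∈ F v₂,
      -(m_J * ‖M v₁ - M v₂‖ ^ 2) ≤ (ξ₁ - ξ₂) (v₁ - v₂))
    (hτ : τ < (m_B - m_J * ‖M‖ ^ 2) / (c_E * c_q))
    (g : V →L[ℝ] ℝ) (ub ut : V)
    (hub : ∃ ξ ∈ F ub, A ub + τ • B ub + τ • K ub + τ • ξ = g)
    (hut : ∃ ξ ∈ F ut, A ut + τ • B ut + τ • K ut + τ • ξ = g) :
    ub = ut := by
  obtain ⟨ξ₁, hξ₁, h₁⟩ := hub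
  obtain ⟨ξ₂, hξ₂, h₂⟩ := hut
  have h_energy := apply_sub_self_eq_zero_of_eq A B K τ (h₁.trans h₂.symm)
  have hF_lower := neg_mul_opNorm_sq_le_of_relaxed_monotone hmJ (hF ub ut ξ₁ hξ₁ ξ₂ hξ₂)
  set w := ub - ut
  have hK_lower := neg_mul_norm_sq_le_apply_self hK w
  have h_gap : 0 < m_B - m_J * ‖M‖ ^ 2 - c_E * c_q * τ := by
    rw [lt_div_iff₀ (mul_pos hcE hcq)] at hτ
    linarith
  have h_coeff : 0 < m_A + τ * (m_B - m_J * ‖M‖ ^ 2 - c_E * c_q * τ) := by positivity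
  have h_bound : (m_A + τ * (m_B - m_J * ‖M‖ ^ 2 - c_E * c_q * τ)) * ‖w‖ ^ 2 ≤ 0 := by
    linear_combination hAcoer w + τ * hBcoer w + τ * hK_lower + τ * hF_lower + h_energy
  have hw : ‖w‖ ^ 2 = 0 := (nonpos_of_mul_nonpos_right h_bound h_coeff).antisymm (sq_nonneg _)
  exact sub_eq_zero.mp (norm_eq_zero.mp (pow_eq_zero_iff two_ne_zero |>.mp hw))

/-- Uniqueness for the discrete Rothe problem: under coercivity, the relaxed
monotonicity of the multivalued term, and the smallness conditions on `τ`, any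
two solutions of `L(v) ∋ g` coincide. -/
theorem rothe_discrete_uniqueness {V X : Type*} [NormedAddCommGroup V]
    [InnerProductSpace ℝ V] [NormedAddCommGroup X] [NormedSpace ℝ X]
    (A B K : V →L[ℝ] V →L[ℝ] ℝ) (M : V →L[ℝ] X)
    (F : V → Set (V →L[ℝ] ℝ))
    (m_A m_B m_J c_E c_q τ : ℝ)
    (hmA : 0 < m_A) (hmB : 0 < m_B) (hmJ : 0 ≤ m_J)
    (hcE : 0 < c_E) (hcq : 0 < c_q) (hτpos : 0 < τ)
    (hAcoer : ∀ v : V, m_A * ‖v‖ ^ 2 ≤ A v v)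
    (hBcoer : ∀ v : V, m_B * ‖v‖ ^ 2 ≤ B v v)
    (hK : ∀ v : V, ‖K v‖ ≤ c_E * c_q * τ * ‖v‖)
    (hF : ∀ v₁ v₂ : V, ∀ ξ₁ ∈ F v₁, ∀ ξ₂ ∈ F v₂,
      -(m_J * ‖M v₁ - M v₂‖ ^ 2) ≤ (ξ₁ - ξ₂) (v₁ - v₂))
    (hsmall : m_J * ‖M‖ ^ 2 < m_B)
    (hτ : τ < (m_B - m_J * ‖M‖ ^ 2) / (c_E * c_q))
    (g : V →L[ℝ] ℝ) (ub ut : V)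
    (hub : ∃ ξ ∈ F ub, A ub + τ • B ub + τ • K ub + τ • ξ = g)
    (hut : ∃ ξ ∈ F ut, A ut + τ • B ut + τ • K ut + τ • ξ = g) :
    ub = ut :=
  rothe_discrete_uniqueness_general A B K M F m_A m_B m_J c_E c_q τ hmA hmJ hcE hcq hτpos hAcoer
    hBcoer hK hF hτ g ub ut hub hut
end
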